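/- arXiv:1010.4111 — 5 statements merged into one kernel-verified Lean document; each statement's English description precedes it below -/
import Mathlib

section
/- For ordinals γ < β, one has 3_2(γ) × 3_2(γ) < 3_2(β), where 3_2(β) := 3^(3^β) in ordinal exponentiation and × is ordinal (natural) multiplication. -/
/-
Since `3_2(γ + 1) = 3_2(γ) ^ 3` and `3_2` is monotone, it suffices that `a ⨳ a < a ^ 3` for
`a ≥ 2`. For finite `a` this is arithmetic. For infinite `a`, put `d = log_ω a ≥ 1`, so that
`a < ω ^ (d + 1)`. Powers of `ω` are closed under `♯`, and `ω ^ x ⨳ ω ^ y ≤ ω ^ (x ♯ y)`; together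
these give `a ⨳ a < ω ^ (d ♯ d + 1)`. Finally `d ♯ d < d * 3`, because `♯` doubles the leading
coefficient of `d` while `* 3` triples it, so `ω ^ (d ♯ d + 1) ≤ (ω ^ d) ^ 3 ≤ a ^ 3`.
-/

universe u

namespace Ordinal

/-- Natural addition (as in the older Mathlib's `Ordinal.nadd`). -/
noncomputable def nadd (a b : Ordinal.{u}) : Ordinal.{u} :=
  max (⨆ x : Set.Iio a, Order.succ (nadd x.1 b)) (⨆ x : Set.Iio b, Order.succ (nadd a x.1))
termination_by (a, b)
decreasing_by
  · exact Prod.Lex.left _ _ x.2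
  · exact Prod.Lex.right _ x.2

/-- Natural multiplication (as in the older Mathlib's `Ordinal.nmul`). -/
noncomputable def nmul (a b : Ordinal.{u}) : Ordinal.{u} :=
  sInf {c | ∀ a' < a, ∀ b' < b, nadd (nmul a' b) (nmul a b') < nadd c (nmul a' b')}
termination_by (a, b)
decreasing_by
  · exact Prod.Lex.left _ _ (by assumption)
  · exact Prod.Lex.right _ (by assumption)
  · exact Prod.Lex.left _ _ (by assumption)

end Ordinal

namespace NaturalOps

infixl:70 " ⨳ " => Ordinal.nmul

end NaturalOps

open Ordinal NaturalOps

/-- `3_2(β) := 3^(3^β)` in ordinal exponentiation. -/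
noncomputable def threeTwo (β : Ordinal) : Ordinal := (3 : Ordinal) ^ ((3 : Ordinal) ^ β)

infixl:65 " ♯ " => Ordinal.nadd

namespace Ordinal

open Order

variable {a a' b b' c d o p x y : Ordinal.{u}}

theorem nadd_le_iff : a ♯ b ≤ c ↔ (∀ a' < a, a' ♯ b < c) ∧ ∀ b' < b, a ♯ b' < c := by
  rw [nadd.eq_1 a b, max_le_iff, Ordinal.iSup_le_iff, Ordinal.iSup_le_iff]
  simp only [succ_le_iff, Subtype.forall, Set.mem_Iio]

theorem nadd_lt_nadd_right (h : a < b) (c : Ordinal.{u}) : a ♯ c < b ♯ c :=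
  (nadd_le_iff.1 le_rfl).1 a h

theorem nadd_lt_nadd_left (h : b < c) (a : Ordinal.{u}) : a ♯ b < a ♯ c :=
  (nadd_le_iff.1 le_rfl).2 b h

theorem nadd_le_nadd_right (h : a ≤ b) (c : Ordinal.{u}) : a ♯ c ≤ b ♯ c :=
  StrictMono.monotone (fun _ _ h ↦ nadd_lt_nadd_right h c) h

theorem nadd_le_nadd_left (h : b ≤ c) (a : Ordinal.{u}) : a ♯ b ≤ a ♯ c :=
  StrictMono.monotone (fun _ _ h ↦ nadd_lt_nadd_left h a) h

theorem nadd_lt_nadd_iff_left : a ♯ b < a ♯ c ↔ b < c :=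
  StrictMono.lt_iff_lt fun _ _ h ↦ nadd_lt_nadd_left h a

theorem nadd_lt_nadd_of_lt_of_le (h₁ : a < b) (h₂ : c ≤ d) : a ♯ c < b ♯ d :=
  (nadd_lt_nadd_right h₁ c).trans_le (nadd_le_nadd_left h₂ b)

theorem nadd_lt_nadd_of_le_of_lt (h₁ : a ≤ b) (h₂ : c < d) : a ♯ c < b ♯ d :=
  (nadd_le_nadd_right h₁ c).trans_lt (nadd_lt_nadd_left h₂ b)

theorem lt_nadd_iff : c < a ♯ b ↔ (∃ a' < a, c ≤ a' ♯ b) ∨ ∃ b' < b, c ≤ a ♯ b' := by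
  simpa only [not_le, not_and_or, not_forall, not_lt, exists_prop] using nadd_le_iff.not

theorem nadd_le_of_strictMono {f : Ordinal.{u} → Ordinal.{u} → Ordinal.{u}}
    (h₁ : ∀ b, StrictMono (f · b)) (h₂ : ∀ a, StrictMono (f a)) (a b : Ordinal.{u}) :
    a ♯ b ≤ f a b := by
  induction a using WellFoundedLT.induction generalizing b with | _ a IHa =>
  induction b using WellFoundedLT.induction with | _ b IHb =>
  exact nadd_le_iff.2 ⟨fun a' ha ↦ (IHa a' ha b).trans_lt (h₁ b ha),
    fun b' hb ↦ (IHb b' hb).trans_lt (h₂ a hb)⟩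

theorem nadd_comm (a b : Ordinal.{u}) : a ♯ b = b ♯ a := by
  have key : ∀ a b : Ordinal.{u}, a ♯ b ≤ b ♯ a := nadd_le_of_strictMono
    (fun _ _ _ h ↦ nadd_lt_nadd_left h _) (fun _ _ _ h ↦ nadd_lt_nadd_right h _)
  exact (key a b).antisymm (key b a)

@[simp]
theorem nadd_zero (a : Ordinal.{u}) : a ♯ 0 = a := by
  induction a using WellFoundedLT.induction with | _ a IH =>
  refine le_antisymm (nadd_le_iff.2 ⟨fun a' ha ↦ by rwa [IH a' ha], fun _ h ↦ absurd h (by simp)⟩) ?_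
  by_contra! hlt
  simpa [IH _ hlt] using nadd_lt_nadd_right hlt 0

theorem le_self_nadd : a ≤ a ♯ b :=
  (nadd_zero a).symm.trans_le (nadd_le_nadd_left zero_le a)

theorem nadd_assoc (a b c : Ordinal.{u}) : a ♯ b ♯ c = a ♯ (b ♯ c) := by
  induction a using WellFoundedLT.induction generalizing b c with | _ a IHa =>
  induction b using WellFoundedLT.induction generalizing c with | _ b IHb =>
  induction c using WellFoundedLT.induction with | _ c IHc =>
  apply le_antisymm
  · refine nadd_le_iff.2 ⟨fun x hx ↦ ?_, fun c' hc ↦ ?_⟩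
    · rcases lt_nadd_iff.1 hx with ⟨a', ha, hx⟩ | ⟨b', hb, hx⟩
      · calc x ♯ c ≤ a' ♯ b ♯ c := nadd_le_nadd_right hx c
          _ = a' ♯ (b ♯ c) := IHa a' ha b c
          _ < a ♯ (b ♯ c) := nadd_lt_nadd_right ha _
      · calc x ♯ c ≤ a ♯ b' ♯ c := nadd_le_nadd_right hx c
          _ = a ♯ (b' ♯ c) := IHb b' hb c
          _ < a ♯ (b ♯ c) := nadd_lt_nadd_left (nadd_lt_nadd_right hb c) a
    · rw [IHc c' hc]
      exact nadd_lt_nadd_left (nadd_lt_nadd_left hc b) a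
  · refine nadd_le_iff.2 ⟨fun a' ha ↦ ?_, fun x hx ↦ ?_⟩
    · rw [← IHa a' ha b c]
      exact nadd_lt_nadd_right (nadd_lt_nadd_right ha b) c
    · rcases lt_nadd_iff.1 hx with ⟨b', hb, hx⟩ | ⟨c', hc, hx⟩
      · calc a ♯ x ≤ a ♯ (b' ♯ c) := nadd_le_nadd_left hx a
          _ = a ♯ b' ♯ c := (IHb b' hb c).symm
          _ < a ♯ b ♯ c := nadd_lt_nadd_right (nadd_lt_nadd_left hb a) c
      · calc a ♯ x ≤ a ♯ (b ♯ c') := nadd_le_nadd_left hx a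
          _ = a ♯ b ♯ c' := (IHc c' hc).symm
          _ < a ♯ b ♯ c := nadd_lt_nadd_left hc _

instance : Std.Commutative (α := Ordinal.{u}) nadd := ⟨nadd_comm⟩

instance : Std.Associative (α := Ordinal.{u}) nadd := ⟨nadd_assoc⟩

theorem nadd_succ (a b : Ordinal.{u}) : a ♯ succ b = succ (a ♯ b) := by
  induction a using WellFoundedLT.induction with | _ a IH =>
  refine le_antisymm (nadd_le_iff.2 ⟨fun a' ha ↦ ?_, fun b' hb ↦ ?_⟩)
    (succ_le_of_lt (nadd_lt_nadd_left (lt_succ b) a))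
  · rw [IH a' ha]
    exact succ_lt_succ (nadd_lt_nadd_right ha b)
  · exact lt_succ_of_le (nadd_le_nadd_left (le_of_lt_succ hb) a)

theorem nadd_natCast (a : Ordinal.{u}) (n : ℕ) : a ♯ n = a + n := by
  induction n with
  | zero => simp
  | succ n ih => rw [Nat.cast_succ, ← succ_eq_add_one, nadd_succ, ih, succ_eq_add_one, succ_eq_add_one, add_assoc]

theorem add_le_nadd (a b : Ordinal.{u}) : a + b ≤ a ♯ b := by
  induction b using WellFoundedLT.induction with | _ b IH =>
  rcases zero_or_succ_or_isSuccLimit b with rfl | ⟨c, rfl⟩ | hb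
  · simp
  · rw [nadd_succ, succ_eq_add_one, ← add_assoc, ← succ_eq_add_one]
    exact succ_le_succ (IH c (lt_succ c))
  · exact (add_le_iff_of_isSuccLimit hb).2 fun d hd ↦ (IH d hd).trans (nadd_le_nadd_left hd.le a)

theorem nmul_nonempty (a b : Ordinal.{u}) :
    {c : Ordinal.{u} | ∀ a' < a, ∀ b' < b, a' ⨳ b ♯ a ⨳ b' < c ♯ a' ⨳ b'}.Nonempty := by
  refine ⟨⨆ x : Set.Iio a, ⨆ y : Set.Iio b, succ (x.1 ⨳ b ♯ a ⨳ y.1),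
    fun a' ha b' hb ↦ ?_⟩
  have h₁ := Ordinal.le_iSup (fun y : Set.Iio b ↦ succ (a' ⨳ b ♯ a ⨳ y.1)) ⟨b', hb⟩
  have h₂ := Ordinal.le_iSup
    (fun x : Set.Iio a ↦ ⨆ y : Set.Iio b, succ (x.1 ⨳ b ♯ a ⨳ y.1)) ⟨a', ha⟩
  exact (lt_succ _).trans_le ((h₁.trans h₂).trans le_self_nadd)

theorem nmul_nadd_lt (ha : a' < a) (hb : b' < b) : a' ⨳ b ♯ a ⨳ b' < a ⨳ b ♯ a' ⨳ b' := by
  rw [nmul.eq_1 a b]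
  exact csInf_mem (nmul_nonempty a b) a' ha b' hb

theorem nmul_le_iff : a ⨳ b ≤ c ↔ ∀ a' < a, ∀ b' < b, a' ⨳ b ♯ a ⨳ b' < c ♯ a' ⨳ b' := by
  refine ⟨fun h a' ha b' hb ↦ (nmul_nadd_lt ha hb).trans_le (nadd_le_nadd_right h _), fun h ↦ ?_⟩
  rw [nmul.eq_1 a b]
  exact csInf_le' h

theorem lt_nmul_iff : c < a ⨳ b ↔ ∃ a' < a, ∃ b' < b, c ♯ a' ⨳ b' ≤ a' ⨳ b ♯ a ⨳ b' := by
  simpa only [not_le, not_forall, not_lt, exists_prop] using nmul_le_iff.not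

theorem nmul_comm (a b : Ordinal.{u}) : a ⨳ b = b ⨳ a := by
  induction a using WellFoundedLT.induction generalizing b with | _ a IHa =>
  induction b using WellFoundedLT.induction with | _ b IHb =>
  apply le_antisymm
  · refine nmul_le_iff.2 fun a' ha b' hb ↦ ?_
    rw [IHa a' ha b, IHb b' hb, IHa a' ha b', nadd_comm (b ⨳ a')]
    exact nmul_nadd_lt hb ha
  · refine nmul_le_iff.2 fun b' hb a' ha ↦ ?_
    rw [← IHb b' hb, ← IHa a' ha b, ← IHa a' ha b', nadd_comm (a ⨳ b')]
    exact nmul_nadd_lt ha hb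

@[simp]
theorem nmul_zero (a : Ordinal.{u}) : a ⨳ 0 = 0 :=
  le_antisymm (nmul_le_iff.2 fun _ _ _ hb ↦ absurd hb (by simp)) zero_le

@[simp]
theorem zero_nmul (a : Ordinal.{u}) : 0 ⨳ a = 0 := by
  rw [nmul_comm, nmul_zero]

theorem nmul_lt_nmul_of_pos_right (h : a' < a) (hb : 0 < b) : a' ⨳ b < a ⨳ b := by
  simpa using nmul_nadd_lt h hb

theorem nmul_le_nmul_right (h : a ≤ b) (c : Ordinal.{u}) : a ⨳ c ≤ b ⨳ c := by
  rcases eq_zero_or_pos c with rfl | hc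
  · simp
  · exact StrictMono.monotone (fun _ _ h ↦ nmul_lt_nmul_of_pos_right h hc) h

@[simp]
theorem nmul_one (a : Ordinal.{u}) : a ⨳ 1 = a := by
  induction a using WellFoundedLT.induction with | _ a IH =>
  refine le_antisymm (nmul_le_iff.2 fun a' ha b' hb ↦ ?_) ?_
  · rw [lt_one_iff] at hb
    simpa [hb, IH a' ha] using ha
  · by_contra! hlt
    simpa [IH _ hlt] using nmul_lt_nmul_of_pos_right hlt zero_lt_one

theorem nmul_nadd_le (ha : a' ≤ a) (hb : b' ≤ b) : a' ⨳ b ♯ a ⨳ b' ≤ a ⨳ b ♯ a' ⨳ b' := by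
  rcases ha.lt_or_eq with ha | rfl
  · rcases hb.lt_or_eq with hb | rfl
    · exact (nmul_nadd_lt ha hb).le
    · rw [nadd_comm]
  · exact le_rfl

theorem nmul_nadd (a b c : Ordinal.{u}) : a ⨳ (b ♯ c) = a ⨳ b ♯ a ⨳ c := by
  induction a using WellFoundedLT.induction generalizing b c with | _ a IHa =>
  induction b using WellFoundedLT.induction generalizing c with | _ b IHb =>
  induction c using WellFoundedLT.induction with | _ c IHc =>
  apply le_antisymm
  · refine nmul_le_iff.2 fun a' ha d hd ↦ ?_
    rw [IHa a' ha b c]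
    rcases lt_nadd_iff.1 hd with ⟨b', hb, hd⟩ | ⟨c', hc, hd⟩
    · have := nadd_lt_nadd_of_lt_of_le (nmul_nadd_lt ha hb) (nmul_nadd_le ha.le hd)
      rw [IHa a' ha b' c, IHb b' hb c] at this
      refine (nadd_lt_nadd_iff_left (a := a ⨳ b' ♯ a' ⨳ b')).1
        (lt_of_eq_of_lt ?_ (lt_of_lt_of_eq this ?_)) <;> ac_rfl
    · have := nadd_lt_nadd_of_lt_of_le (nmul_nadd_lt ha hc) (nmul_nadd_le ha.le hd)
      rw [IHa a' ha b c', IHc c' hc] at this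
      refine (nadd_lt_nadd_iff_left (a := a ⨳ c' ♯ a' ⨳ c')).1
        (lt_of_eq_of_lt ?_ (lt_of_lt_of_eq this ?_)) <;> ac_rfl
  · refine nadd_le_iff.2 ⟨fun d hd ↦ ?_, fun d hd ↦ ?_⟩
    · obtain ⟨a', ha, b', hb, hd⟩ := lt_nmul_iff.1 hd
      have := nadd_lt_nadd_of_le_of_lt hd (nmul_nadd_lt ha (nadd_lt_nadd_right hb c))
      rw [IHa a' ha b c, IHb b' hb c, IHa a' ha b' c] at this
      refine (nadd_lt_nadd_iff_left (a := a' ⨳ b ♯ a' ⨳ c ♯ a ⨳ b' ♯ a' ⨳ b')).1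
        (lt_of_eq_of_lt ?_ (lt_of_lt_of_eq this ?_)) <;> ac_rfl
    · obtain ⟨a', ha, c', hc, hd⟩ := lt_nmul_iff.1 hd
      have := nadd_lt_nadd_of_le_of_lt hd (nmul_nadd_lt ha (nadd_lt_nadd_left hc b))
      rw [IHa a' ha b c, IHc c' hc, IHa a' ha b c'] at this
      refine (nadd_lt_nadd_iff_left (a := a' ⨳ b ♯ a' ⨳ c ♯ a ⨳ c' ♯ a' ⨳ c')).1
        (lt_of_eq_of_lt ?_ (lt_of_lt_of_eq this ?_)) <;> ac_rfl

theorem nadd_nmul (a b c : Ordinal.{u}) : (a ♯ b) ⨳ c = a ⨳ c ♯ b ⨳ c := by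
  rw [nmul_comm, nmul_nadd, nmul_comm c, nmul_comm c]

theorem nmul_add_one (a b : Ordinal.{u}) : a ⨳ (b + 1) = a ⨳ b ♯ a := by
  rw [← Nat.cast_one, ← nadd_natCast, nmul_nadd, Nat.cast_one, nmul_one]

theorem mul_le_nmul (a b : Ordinal.{u}) : a * b ≤ a ⨳ b := by
  induction b using WellFoundedLT.induction with | _ b IH =>
  rcases zero_or_succ_or_isSuccLimit b with rfl | ⟨c, rfl⟩ | hb
  · simp
  · rw [succ_eq_add_one, mul_add_one, nmul_add_one]
    exact (add_le_nadd _ a).trans (nadd_le_nadd_right (IH c (lt_succ c)) a)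
  · refine (mul_le_iff_of_isSuccLimit hb).2 fun d hd ↦ (IH d hd).trans ?_
    rw [nmul_comm a, nmul_comm a]
    exact nmul_le_nmul_right hd.le a

theorem nmul_natCast_right_comm (a b : Ordinal.{u}) (n : ℕ) : a ⨳ n ⨳ b = a ⨳ b ⨳ n := by
  induction n with
  | zero => simp
  | succ n ih => rw [Nat.cast_succ, nmul_add_one, nmul_add_one, nadd_nmul, ih]

theorem natCast_nmul_natCast (m n : ℕ) : (m : Ordinal.{u}) ⨳ n = (m * n : ℕ) := by
  induction n with
  | zero => simp
  | succ n ih => rw [Nat.cast_succ, nmul_add_one, ih, nadd_natCast, Nat.mul_succ, Nat.cast_add]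

theorem IsPrincipal.nmul_natCast_lt (ho : IsPrincipal (· ♯ ·) o) (ha : a < o) (n : ℕ) :
    a ⨳ n < o := by
  induction n with
  | zero => simpa using ha.pos
  | succ n ih => rw [Nat.cast_succ, nmul_add_one]; exact ho ih ha

-- `♯`-principality of `p` means that the remainders never carry into the quotient.
theorem nadd_le_mul_div_nadd_add_mod (hp : IsPrincipal (· ♯ ·) p) (a b : Ordinal.{u}) :
    a ♯ b ≤ p * (a / p ♯ b / p) + (a % p ♯ b % p) := by
  rcases eq_or_ne p 0 with rfl | hp₀
  · simp
  have mono : ∀ b, StrictMono fun a ↦ p * (a / p ♯ b / p) + (a % p ♯ b % p) := by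
    intro b a' a h
    dsimp only
    rcases (div_le_left h.le p).lt_or_eq with hdiv | hdiv
    · calc p * (a' / p ♯ b / p) + (a' % p ♯ b % p)
          < p * (a' / p ♯ b / p) + p := add_lt_add_right (hp (mod_lt a' hp₀) (mod_lt b hp₀)) _
        _ = p * succ (a' / p ♯ b / p) := (mul_succ _ _).symm
        _ ≤ p * (a / p ♯ b / p) := mul_le_mul_right (succ_le_of_lt
            (nadd_lt_nadd_right hdiv _)) p
        _ ≤ p * (a / p ♯ b / p) + (a % p ♯ b % p) := le_self_add
    · have hmod : a' % p < a % p := by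
        rw [← div_add_mod a' p, ← div_add_mod a p, hdiv] at h
        exact (add_lt_add_iff_left _).1 h
      rw [hdiv]
      exact add_lt_add_right (nadd_lt_nadd_right hmod _) _
  refine nadd_le_of_strictMono mono (fun a b' b h ↦ ?_) a b
  simpa only [nadd_comm (a / p), nadd_comm (a % p)] using mono a h

theorem IsPrincipal.nadd_mul_omega0 (hp : IsPrincipal (· ♯ ·) p) :
    IsPrincipal (· ♯ ·) (p * ω) := by
  intro a b ha hb
  have hp₀ : p ≠ 0 := by rintro rfl; simp at ha
  obtain ⟨m, hm⟩ := lt_omega0.1 ((lt_mul_iff_div_lt hp₀).1 ha)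
  obtain ⟨n, hn⟩ := lt_omega0.1 ((lt_mul_iff_div_lt hp₀).1 hb)
  calc a ♯ b ≤ p * (a / p ♯ b / p) + (a % p ♯ b % p) := nadd_le_mul_div_nadd_add_mod hp a b
    _ < p * (m + n : ℕ) + p := by
        rw [hm, hn, nadd_natCast, ← Nat.cast_add]
        exact add_lt_add_right (hp (mod_lt a hp₀) (mod_lt b hp₀)) _
    _ = p * (m + n + 1 : ℕ) := by rw [Nat.cast_succ, mul_add_one]
    _ < p * ω := mul_lt_mul_of_pos_left (natCast_lt_omega0 _) (pos_iff_ne_zero.2 hp₀)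

theorem isPrincipal_nadd_omega0_opow (e : Ordinal.{u}) : IsPrincipal (· ♯ ·) (ω ^ e) := by
  induction e using limitRecOn with
  | zero => simp
  | add_one d ih => rw [opow_add_one]; exact ih.nadd_mul_omega0
  | limit e he ih =>
    rw [opow_limit omega0_ne_zero he]
    exact IsPrincipal.iSup fun d ↦ ih d.1 d.2

theorem nmul_lt_of_lt_omega0_opow (ho : IsPrincipal (· ♯ ·) o) (ho₀ : 0 < o)
    (hx : x < ω ^ a) (hy : ∀ c < a, ω ^ c ⨳ y < o) : x ⨳ y < o := by
  rcases eq_or_ne a 0 with rfl | ha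
  · rw [opow_zero, lt_one_iff] at hx
    simpa [hx] using ho₀
  obtain ⟨c, hc, n, hxn⟩ := (lt_omega0_opow ha).1 hx
  calc x ⨳ y ≤ ω ^ c ⨳ n ⨳ y := nmul_le_nmul_right (hxn.le.trans (mul_le_nmul _ _)) y
    _ = ω ^ c ⨳ y ⨳ n := nmul_natCast_right_comm _ _ _
    _ < o := ho.nmul_natCast_lt (hy c hc) n

theorem omega0_opow_nmul_omega0_opow_le (a b : Ordinal.{u}) : ω ^ a ⨳ ω ^ b ≤ ω ^ (a ♯ b) := by
  induction a using WellFoundedLT.induction generalizing b with | _ a IHa =>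
  induction b using WellFoundedLT.induction with | _ b IHb =>
  have ho := isPrincipal_nadd_omega0_opow (a ♯ b)
  have ho₀ : 0 < ω ^ (a ♯ b) := opow_pos _ omega0_pos
  refine nmul_le_iff.2 fun x hx y hy ↦ (ho ?_ ?_).trans_le le_self_nadd
  · refine nmul_lt_of_lt_omega0_opow ho ho₀ hx fun c hc ↦ (IHa c hc b).trans_lt ?_
    exact (opow_lt_opow_iff_right one_lt_omega0).2 (nadd_lt_nadd_right hc b)
  · rw [nmul_comm]
    refine nmul_lt_of_lt_omega0_opow ho ho₀ hy fun c hc ↦ ?_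
    rw [nmul_comm]
    exact (IHb c hc).trans_lt ((opow_lt_opow_iff_right one_lt_omega0).2 (nadd_lt_nadd_left hc a))

theorem nmul_lt_omega0_opow_succ (hx : x < ω ^ succ a) (hy : y < ω ^ succ b) :
    x ⨳ y < ω ^ succ (a ♯ b) := by
  have ho := isPrincipal_nadd_omega0_opow (succ (a ♯ b))
  have ho₀ : 0 < ω ^ succ (a ♯ b) := opow_pos _ omega0_pos
  refine nmul_lt_of_lt_omega0_opow ho ho₀ hx fun c hc ↦ ?_
  rw [nmul_comm]
  refine nmul_lt_of_lt_omega0_opow ho ho₀ hy fun c' hc' ↦ ?_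
  refine (omega0_opow_nmul_omega0_opow_le c' c).trans_lt
    ((opow_lt_opow_iff_right one_lt_omega0).2 (lt_succ_of_le ?_))
  rw [nadd_comm a]
  exact (nadd_le_nadd_right (le_of_lt_succ hc') c).trans
    (nadd_le_nadd_left (le_of_lt_succ hc) b)

theorem nadd_self_lt_mul_three (ha : a ≠ 0) : a ♯ a < a * 3 := by
  set p := ω ^ log ω a
  have hp₀ : p ≠ 0 := opow_ne_zero _ omega0_ne_zero
  obtain ⟨n, hn⟩ := lt_omega0.1 (div_opow_log_lt a one_lt_omega0)
  have hn₀ : 0 < n := by exact_mod_cast hn ▸ div_opow_log_pos ω ha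
  calc a ♯ a ≤ p * (a / p ♯ a / p) + (a % p ♯ a % p) :=
        nadd_le_mul_div_nadd_add_mod (isPrincipal_nadd_omega0_opow _) a a
    _ < p * (n + n : ℕ) + p := by
        rw [hn, nadd_natCast, ← Nat.cast_add]
        exact add_lt_add_right (isPrincipal_nadd_omega0_opow _ (mod_lt a hp₀) (mod_lt a hp₀)) _
    _ = p * (n + n + 1 : ℕ) := by rw [Nat.cast_succ, mul_add_one]
    _ ≤ p * (n * 3 : ℕ) := mul_le_mul_right (by norm_cast; omega) p
    _ = p * (a / p) * 3 := by rw [hn, mul_assoc]; push_cast; rfl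
    _ ≤ a * 3 := mul_le_mul_left (mul_div_le a p) 3

theorem nmul_self_lt_opow_three (ha : 2 ≤ a) : a ⨳ a < a ^ (3 : Ordinal) := by
  rcases lt_or_ge a ω with hfin | hinf
  · obtain ⟨n, rfl⟩ := lt_omega0.1 hfin
    have hn : 2 ≤ n := by exact_mod_cast ha
    rw [natCast_nmul_natCast, ← Nat.cast_ofNat, opow_natCast, ← natCast_pow, Nat.cast_lt]
    calc n * n = n ^ 2 := (sq n).symm
      _ < n ^ 3 := Nat.pow_lt_pow_right hn (by norm_num)
  · have ha₀ : a ≠ 0 := (omega0_pos.trans_le hinf).ne'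
    set d := log ω a
    have hd : d ≠ 0 := (log_pos one_lt_omega0 ha₀ hinf).ne'
    have hlt : a < ω ^ succ d := lt_opow_succ_log_self one_lt_omega0 a
    calc a ⨳ a < ω ^ succ (d ♯ d) := nmul_lt_omega0_opow_succ hlt hlt
      _ ≤ ω ^ (d * 3) :=
          opow_le_opow_right omega0_pos (succ_le_of_lt (nadd_self_lt_mul_three hd))
      _ = (ω ^ d) ^ (3 : Ordinal) := opow_mul _ _ _
      _ ≤ a ^ (3 : Ordinal) := opow_le_opow_left _ (opow_log_le_self ω ha₀)

end Ordinal

theorem two_le_threeTwo (β : Ordinal) : 2 ≤ threeTwo β :=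
  calc (2 : Ordinal) ≤ 3 ^ (1 : Ordinal) := by rw [opow_one]; norm_num
    _ ≤ threeTwo β := opow_le_opow_right (by norm_num)
        (Order.one_le_iff_pos.2 (opow_pos _ (by norm_num)))

theorem threeTwo_add_one (β : Ordinal) : threeTwo (β + 1) = threeTwo β ^ (3 : Ordinal) := by
  rw [threeTwo, threeTwo, opow_add_one, opow_mul]

theorem threeTwo_mono : Monotone threeTwo := fun _ _ h ↦
  opow_le_opow_right (by norm_num) (opow_le_opow_right (by norm_num) h)

/-- For ordinals `γ < β`, `3_2(γ) ⨳ 3_2(γ) < 3_2(β)`, where `⨳` is natural product. -/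
theorem threeTwo_nmul_lt {γ β : Ordinal} (h : γ < β) :
    threeTwo γ ⨳ threeTwo γ < threeTwo β :=
  calc threeTwo γ ⨳ threeTwo γ < threeTwo γ ^ (3 : Ordinal) :=
        nmul_self_lt_opow_three (two_le_threeTwo γ)
    _ = threeTwo (γ + 1) := (threeTwo_add_one γ).symm
    _ ≤ threeTwo β := threeTwo_mono (Order.add_one_le_of_lt h)
end

section
/- Define ω₁ := ω and ω_{m+1} := ω^{ω_m}. Then for every m ≥ 1, 3_{2m}(ω²) ≤ ω_{2m+1}, where 3_0(β) = β and 3_{k+1}(β) = 3^{3_k(β)}. -/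
open Ordinal

/-- The tower of `ω`'s: `ω_0 = 1` (so that `ω_1 = ω`, `ω_{m+1} = ω^{ω_m}`). -/
noncomputable def omegaTower : ℕ → Ordinal
  | 0 => 1
  | m + 1 => omega0 ^ omegaTower m

/-- The tower of `3`'s over `β`: `3_0(β) = β`, `3_{k+1}(β) = 3^{3_k(β)}`. -/
noncomputable def threeTower : ℕ → Ordinal → Ordinal
  | 0, β => β
  | k + 1, β => (3 : Ordinal) ^ threeTower k β

/-! Since `3 ^ ω = ω`, the first step of the tower of `3`'s over `ω²` already lands exactly on
`ω ^ ω = ω_2`: `3 ^ ω² = (3 ^ ω) ^ ω = ω ^ ω`. From there on, `3 ^ α ≤ ω ^ α` lets the tower of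
`ω`'s dominate the tower of `3`'s one level at a time. -/

theorem threeTower_succ' (k : ℕ) (β : Ordinal) :
    threeTower (k + 1) β = threeTower k (3 ^ β) := by
  induction k with
  | zero => rfl
  | succ k ih => rw [threeTower, ih, threeTower]

theorem threeTower_le_omegaTower_add {β : Ordinal} {n : ℕ} (hβ : β ≤ omegaTower n) (k : ℕ) :
    threeTower k β ≤ omegaTower (n + k) := by
  induction k with
  | zero => exact hβ
  | succ k ih =>
    calc (3 : Ordinal) ^ threeTower k β
        ≤ omega0 ^ threeTower k β := opow_le_opow_left _ (natCast_lt_omega0 3).le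
      _ ≤ omega0 ^ omegaTower (n + k) := opow_le_opow_right omega0_pos ih

theorem three_opow_omega0_opow_two : (3 : Ordinal) ^ omega0 ^ (2 : Ordinal) = omegaTower 2 := by
  have three_opow_omega0 : (3 : Ordinal) ^ omega0 = omega0 :=
    opow_omega0 (by norm_num) (natCast_lt_omega0 3)
  rw [show (2 : Ordinal) = 1 + 1 by norm_num, opow_add, opow_one, opow_mul, three_opow_omega0]
  simp [omegaTower]

/-- For every `m ≥ 1`, `3_{2m}(ω²) ≤ ω_{2m+1}`. -/
theorem threeTower_le_omegaTower {m : ℕ} (hm : 1 ≤ m) :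
    threeTower (2 * m) (omega0 ^ (2 : Ordinal)) ≤ omegaTower (2 * m + 1) := by
  obtain ⟨k, hk⟩ : ∃ k, 2 * m = k + 1 := ⟨2 * m - 1, by omega⟩
  rw [hk, threeTower_succ', show k + 1 + 1 = 2 + k by omega]
  exact threeTower_le_omegaTower_add three_opow_omega0_opow_two.le k
end

section
/- Inversion for conjunction in the infinitary calculus: if ⊢^α_1 Γ ⇒ B₀ ∧ B₁ then ⊢^α_1 Γ ⇒ B_i for each i ∈ {0,1}, where ⊢^α_1 denotes derivability with depth ≤ α and all cut formulas of rank 0. -/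
open Ordinal

/-- Sentences of the language `L_HA(I)`: closed equations `t = s` (closed terms
identified with their numeral values), atoms `I(t)`, propositional connectives, and
quantifiers represented by their ω-many numeral instances. -/
inductive Sent : Type
  | eq (n m : ℕ)           -- the closed equation `n̄ = m̄`
  | I (t : ℕ)              -- the atom `I(t̄)`
  | or (A B : Sent)
  | and (A B : Sent)
  | imp (A B : Sent)
  | ex (B : ℕ → Sent)      -- `∃x B(x)`, given by its instances `B(n̄)`
  | all (B : ℕ → Sent)     -- `∀x B(x)`, given by its instances `B(n̄)`

/-- The predicate symbol `I` occurs in the sentence. -/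
def containsI : Sent → Prop
  | .eq _ _ => False
  | .I _ => True
  | .or A B => containsI A ∨ containsI B
  | .and A B => containsI A ∨ containsI B
  | .imp A B => containsI A ∨ containsI B
  | .ex B => ∃ n, containsI (B n)
  | .all B => ∃ n, containsI (B n)

/-- Rank `0` sentences: sentences of `L_HA`, i.e. not containing `I`. -/
def rankZero (A : Sent) : Prop := ¬ containsI A

/-- `Deriv Φop cutOK α Γ C` : in the infinitary sequent calculus (ω-rules for `L∃`
and `R∀`, rules `LI`/`RI` unfolding `I(t)` to `Φop t = Φ(I,t)`), the sequent
`Γ ⇒ C` has a derivation of depth `≤ α` in which every cut formula satisfies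
`cutOK`.  Initial sequents: `Γ, I(t) ⇒ I(t)`; `Γ, ⊥ ⇒ A`; `Γ ⇒ ⊤`. -/
inductive Deriv (Φop : ℕ → Sent) (cutOK : Sent → Prop) :
    Ordinal → Set Sent → Sent → Prop
  | axI {α Γ t} : Sent.I t ∈ Γ → Deriv Φop cutOK α Γ (.I t)
  | axBot {α Γ C n m} : n ≠ m → Sent.eq n m ∈ Γ → Deriv Φop cutOK α Γ C
  | axTop {α Γ n} : Deriv Φop cutOK α Γ (.eq n n)
  | orL {α γ₀ γ₁ Γ A₀ A₁ C} : γ₀ < α → γ₁ < α →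
      Deriv Φop cutOK γ₀ (insert A₀ Γ) C → Deriv Φop cutOK γ₁ (insert A₁ Γ) C →
      Deriv Φop cutOK α (insert (.or A₀ A₁) Γ) C
  | orR₀ {α γ Γ A₀ A₁} : γ < α → Deriv Φop cutOK γ Γ A₀ →
      Deriv Φop cutOK α Γ (.or A₀ A₁)
  | orR₁ {α γ Γ A₀ A₁} : γ < α → Deriv Φop cutOK γ Γ A₁ →
      Deriv Φop cutOK α Γ (.or A₀ A₁)
  | andL₀ {α γ Γ A₀ A₁ C} : γ < α →
      Deriv Φop cutOK γ (insert A₀ (insert (.and A₀ A₁) Γ)) C →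
      Deriv Φop cutOK α (insert (.and A₀ A₁) Γ) C
  | andL₁ {α γ Γ A₀ A₁ C} : γ < α →
      Deriv Φop cutOK γ (insert A₁ (insert (.and A₀ A₁) Γ)) C →
      Deriv Φop cutOK α (insert (.and A₀ A₁) Γ) C
  | andR {α γ₀ γ₁ Γ A₀ A₁} : γ₀ < α → γ₁ < α →
      Deriv Φop cutOK γ₀ Γ A₀ → Deriv Φop cutOK γ₁ Γ A₁ →
      Deriv Φop cutOK α Γ (.and A₀ A₁)
  | impL {α γ₀ γ₁ Γ A B C} : γ₀ < α → γ₁ < α →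
      Deriv Φop cutOK γ₀ (insert (.imp A B) Γ) A →
      Deriv Φop cutOK γ₁ (insert B Γ) C →
      Deriv Φop cutOK α (insert (.imp A B) Γ) C
  | impR {α γ Γ A B} : γ < α → Deriv Φop cutOK γ (insert A Γ) B →
      Deriv Φop cutOK α Γ (.imp A B)
  | exL {α Γ B C} (γ : ℕ → Ordinal) : (∀ n, γ n < α) →
      (∀ n, Deriv Φop cutOK (γ n) (insert (B n) Γ) C) →
      Deriv Φop cutOK α (insert (.ex B) Γ) C
  | exR {α γ Γ B} (n : ℕ) : γ < α → Deriv Φop cutOK γ Γ (B n) →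
      Deriv Φop cutOK α Γ (.ex B)
  | allL {α γ Γ B C} (n : ℕ) : γ < α →
      Deriv Φop cutOK γ (insert (B n) (insert (.all B) Γ)) C →
      Deriv Φop cutOK α (insert (.all B) Γ) C
  | allR {α Γ B} (γ : ℕ → Ordinal) : (∀ n, γ n < α) →
      (∀ n, Deriv Φop cutOK (γ n) Γ (B n)) →
      Deriv Φop cutOK α Γ (.all B)
  | LI {α γ Γ t C} : γ < α → Deriv Φop cutOK γ (insert (Φop t) Γ) C →
      Deriv Φop cutOK α (insert (.I t) Γ) C
  | RI {α γ Γ t} : γ < α → Deriv Φop cutOK γ Γ (Φop t) →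
      Deriv Φop cutOK α Γ (.I t)
  | cut {α γ₀ γ₁ Γ Δ A C} : cutOK A → γ₀ < α → γ₁ < α →
      Deriv Φop cutOK γ₀ Γ A → Deriv Φop cutOK γ₁ (insert A Δ) C →
      Deriv Φop cutOK α (Γ ∪ Δ) C

/-- `⊢^α_1 Γ ⇒ C` : derivability with depth `≤ α` and all cut formulas of rank `0`. -/
def Deriv1 (Φop : ℕ → Sent) (α : Ordinal) (Γ : Set Sent) (C : Sent) : Prop :=
  Deriv Φop rankZero α Γ C


/-! The conjunction in the succedent is principal only in `andR`, whose premises already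
derive `B₀` and `B₁` at smaller depth. Every other rule either is an initial sequent that
does not depend on the succedent, or carries the succedent `B₀ ∧ B₁` into its right premises,
where the induction hypothesis replaces it; cuts are kept, so the cut formulas do not change. -/

theorem Deriv.mono {Φop : ℕ → Sent} {cutOK : Sent → Prop} {α β : Ordinal}
    {Γ : Set Sent} {C : Sent} (h : Deriv Φop cutOK α Γ C) (hle : α ≤ β) :
    Deriv Φop cutOK β Γ C := by
  induction h with
  | axI h => exact .axI h
  | axBot h1 h2 => exact .axBot h1 h2
  | axTop => exact .axTop
  | orL h0 h1 d0 d1 => exact .orL (h0.trans_le hle) (h1.trans_le hle) d0 d1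
  | orR₀ h d => exact .orR₀ (h.trans_le hle) d
  | orR₁ h d => exact .orR₁ (h.trans_le hle) d
  | andL₀ h d => exact .andL₀ (h.trans_le hle) d
  | andL₁ h d => exact .andL₁ (h.trans_le hle) d
  | andR h0 h1 d0 d1 => exact .andR (h0.trans_le hle) (h1.trans_le hle) d0 d1
  | impL h0 h1 d0 d1 => exact .impL (h0.trans_le hle) (h1.trans_le hle) d0 d1
  | impR h d => exact .impR (h.trans_le hle) d
  | exL γ h d => exact .exL γ (fun n => (h n).trans_le hle) d
  | exR n h d => exact .exR n (h.trans_le hle) d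
  | allL n h d => exact .allL n (h.trans_le hle) d
  | allR γ h d => exact .allR γ (fun n => (h n).trans_le hle) d
  | LI h d => exact .LI (h.trans_le hle) d
  | RI h d => exact .RI (h.trans_le hle) d
  | cut hA h0 h1 d0 d1 => exact .cut hA (h0.trans_le hle) (h1.trans_le hle) d0 d1

theorem Deriv.inversion_and {Φop : ℕ → Sent} {cutOK : Sent → Prop} {α : Ordinal}
    {Γ : Set Sent} {B₀ B₁ : Sent} (h : Deriv Φop cutOK α Γ (.and B₀ B₁)) :
    Deriv Φop cutOK α Γ B₀ ∧ Deriv Φop cutOK α Γ B₁ := by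
  generalize hC : Sent.and B₀ B₁ = C at h
  induction h with
  | axI | axTop | orR₀ | orR₁ | impR | exR | allR | RI => nomatch hC
  | axBot hne hmem => exact ⟨.axBot hne hmem, .axBot hne hmem⟩
  | andR h0 h1 d0 d1 =>
      cases hC
      exact ⟨d0.mono h0.le, d1.mono h1.le⟩
  | orL h0 h1 _ _ ih0 ih1 =>
      exact ⟨.orL h0 h1 (ih0 hC).1 (ih1 hC).1, .orL h0 h1 (ih0 hC).2 (ih1 hC).2⟩
  | andL₀ h _ ih => exact (ih hC).imp (.andL₀ h) (.andL₀ h)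
  | andL₁ h _ ih => exact (ih hC).imp (.andL₁ h) (.andL₁ h)
  | impL h0 h1 d0 _ _ ih => exact (ih hC).imp (.impL h0 h1 d0) (.impL h0 h1 d0)
  | exL γ h _ ih => exact ⟨.exL γ h fun n => (ih n hC).1, .exL γ h fun n => (ih n hC).2⟩
  | allL n h _ ih => exact (ih hC).imp (.allL n h) (.allL n h)
  | LI h _ ih => exact (ih hC).imp (.LI h) (.LI h)
  | cut hA h0 h1 d0 _ _ ih => exact (ih hC).imp (.cut hA h0 h1 d0) (.cut hA h0 h1 d0)

/-- Inversion for conjunction: if `⊢^α_1 Γ ⇒ B₀ ∧ B₁` then `⊢^α_1 Γ ⇒ B₀` and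
`⊢^α_1 Γ ⇒ B₁`. -/
theorem inversion_and (Φop : ℕ → Sent) {α : Ordinal} {Γ : Set Sent} {B₀ B₁ : Sent}
    (h : Deriv1 Φop α Γ (.and B₀ B₁)) :
    Deriv1 Φop α Γ B₀ ∧ Deriv1 Φop α Γ B₁ :=
  Deriv.inversion_and h
end

section
/- Inversion for universal quantification: if ⊢^α_1 Γ ⇒ ∀x B(x) in the infinitary calculus, then ⊢^α_1 Γ ⇒ B(n̄) for every numeral n̄, n ∈ ω. -/
open Ordinal

/-!
Induction on the derivation of `Γ ⇒ ∀x B(x)`: the left rules and cut keep the succedent, so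
the inversion passes to their premises; an `R∀` inference already has the derivations of
`Γ ⇒ B(n̄)` as premises, of smaller depth; no other rule or axiom ends in a universal
succedent (save `⊥`-axioms, which end in every succedent). Cuts are untouched, so the cut
rank is preserved.
-/

namespace Deriv

variable {Φop : ℕ → Sent} {cutOK : Sent → Prop}

theorem mono_s12 {α β : Ordinal} {Γ : Set Sent} {C : Sent} (h : Deriv Φop cutOK α Γ C)
    (hαβ : α ≤ β) : Deriv Φop cutOK β Γ C := by
  cases h with
  | axI hI => exact .axI hI
  | axBot hne heq => exact .axBot hne heq
  | axTop => exact .axTop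
  | orL h₀ h₁ d₀ d₁ => exact .orL (h₀.trans_le hαβ) (h₁.trans_le hαβ) d₀ d₁
  | orR₀ h₀ d => exact .orR₀ (h₀.trans_le hαβ) d
  | orR₁ h₀ d => exact .orR₁ (h₀.trans_le hαβ) d
  | andL₀ h₀ d => exact .andL₀ (h₀.trans_le hαβ) d
  | andL₁ h₀ d => exact .andL₁ (h₀.trans_le hαβ) d
  | andR h₀ h₁ d₀ d₁ => exact .andR (h₀.trans_le hαβ) (h₁.trans_le hαβ) d₀ d₁
  | impL h₀ h₁ d₀ d₁ => exact .impL (h₀.trans_le hαβ) (h₁.trans_le hαβ) d₀ d₁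
  | impR h₀ d => exact .impR (h₀.trans_le hαβ) d
  | exL γ hγ d => exact .exL γ (fun n => (hγ n).trans_le hαβ) d
  | exR n h₀ d => exact .exR n (h₀.trans_le hαβ) d
  | allL n h₀ d => exact .allL n (h₀.trans_le hαβ) d
  | allR γ hγ d => exact .allR γ (fun n => (hγ n).trans_le hαβ) d
  | LI h₀ d => exact .LI (h₀.trans_le hαβ) d
  | RI h₀ d => exact .RI (h₀.trans_le hαβ) d
  | cut hA h₀ h₁ d₀ d₁ => exact .cut hA (h₀.trans_le hαβ) (h₁.trans_le hαβ) d₀ d₁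

theorem allR_inversion {α : Ordinal} {Γ : Set Sent} {B : ℕ → Sent}
    (h : Deriv Φop cutOK α Γ (.all B)) (n : ℕ) : Deriv Φop cutOK α Γ (B n) := by
  generalize hC : Sent.all B = C at h
  induction h with
  | axBot hne heq => exact .axBot hne heq
  | orL h₀ h₁ _ _ ih₀ ih₁ => exact .orL h₀ h₁ (ih₀ hC) (ih₁ hC)
  | andL₀ h₀ _ ih => exact .andL₀ h₀ (ih hC)
  | andL₁ h₀ _ ih => exact .andL₁ h₀ (ih hC)
  | impL h₀ h₁ d₀ _ _ ih₁ => exact .impL h₀ h₁ d₀ (ih₁ hC)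
  | exL γ hγ _ ih => exact .exL γ hγ (fun m => ih m hC)
  | allL m h₀ _ ih => exact .allL m h₀ (ih hC)
  | allR γ hγ d =>
      cases hC
      exact (d n).mono_s12 (hγ n).le
  | LI h₀ _ ih => exact .LI h₀ (ih hC)
  | cut hA h₀ h₁ d₀ _ _ ih₁ => exact .cut hA h₀ h₁ d₀ (ih₁ hC)
  | axI | axTop | orR₀ | orR₁ | andR | impR | exR | RI => cases hC

end Deriv

/-- Inversion for universal quantification: if `⊢^α_1 Γ ⇒ ∀x B(x)` then
`⊢^α_1 Γ ⇒ B(n̄)` for every `n ∈ ω`. -/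
theorem inversion_all (Φop : ℕ → Sent) {α : Ordinal} {Γ : Set Sent} {B : ℕ → Sent}
    (h : Deriv1 Φop α Γ (.all B)) : ∀ n : ℕ, Deriv1 Φop α Γ (B n) :=
  Deriv.allR_inversion h
end

section
/- Inversion for ⊥: if ⊢^α_1 Γ ⇒ A and A is a false closed equation ⊥, then ⊢^α_1 Γ ⇒ C for every sentence C. -/
open Ordinal

/-! A false equation is the conclusion of no right rule and of no `⊤`-axiom, so a
derivation of `Γ ⇒ ⊥` consists of left rules and cuts, each passing its succedent on to
its right premise, above `⊥`-axioms, which allow any succedent. Replacing `⊥` by `C`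
throughout gives a derivation of `Γ ⇒ C` of the same depth with the same cut formulas. -/

theorem Deriv.inversion_bot {Φop : ℕ → Sent} {cutOK : Sent → Prop} {α : Ordinal}
    {Γ : Set Sent} {n m : ℕ} (hnm : n ≠ m) (h : Deriv Φop cutOK α Γ (.eq n m))
    (C : Sent) : Deriv Φop cutOK α Γ C := by
  generalize hA : Sent.eq n m = A at h
  induction h generalizing C with
  | axBot hne hmem => exact .axBot hne hmem
  | axTop => cases hA; exact absurd rfl hnm
  | orL h₀ h₁ _ _ ih₀ ih₁ => exact .orL h₀ h₁ (ih₀ C hA) (ih₁ C hA)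
  | andL₀ h₀ _ ih => exact .andL₀ h₀ (ih C hA)
  | andL₁ h₀ _ ih => exact .andL₁ h₀ (ih C hA)
  | impL h₀ h₁ hd _ _ ih => exact .impL h₀ h₁ hd (ih C hA)
  | exL γ hγ _ ih => exact .exL γ hγ fun k => ih k C hA
  | allL k h₀ _ ih => exact .allL k h₀ (ih C hA)
  | LI h₀ _ ih => exact .LI h₀ (ih C hA)
  | cut hok h₀ h₁ hd _ _ ih => exact .cut hok h₀ h₁ hd (ih C hA)
  | axI | orR₀ | orR₁ | andR | impR | exR | allR | RI => cases hA

/-- Inversion for `⊥`: if `⊢^α_1 Γ ⇒ A` where `A` is a false closed equation, then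
`⊢^α_1 Γ ⇒ C` for every sentence `C`. -/
theorem inversion_bot (Φop : ℕ → Sent) {α : Ordinal} {Γ : Set Sent} {n m : ℕ}
    (hnm : n ≠ m) (h : Deriv1 Φop α Γ (.eq n m)) :
    ∀ C : Sent, Deriv1 Φop α Γ C :=
  Deriv.inversion_bot hnm h
end
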